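/- For any graph G and the root vertex v one of the two vertices of the complete graph K_2, the Italian domination number of the rooted product satisfies γ_I(G∘_v K_2) = n(G) + γ(G). -/

import Mathlib

/-! Write the vertices of `G ∘ K₂` as roots `(x, v)` and pendant vertices `(x, v + 1)`.
Putting 2 on the roots of a minimum dominating set `D`, 0 on their pendant vertices and 1 on
every other pendant vertex gives an Italian dominating function of weight `n(G) + |D|`.
Conversely, an Italian dominating function `f` has weight at least 1 on every copy of `K₂`,
since a pendant vertex of value 0 forces 2 on its root. The copies of weight at least 2
dominate `G`: on a copy of weight 1 the root has value 0 and gets only 1 from its pendant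
vertex, so some neighbour `y` has a root of positive value, and the copy of `y` then has
weight at least 2. -/

open Finset

open scoped Classical

/-- An Italian dominating function on a finite simple graph: values in {0,1,2} and
every vertex with value 0 has neighbour values summing to at least 2. -/
noncomputable def IsIDF {α : Type*} [Fintype α] (G : SimpleGraph α) (f : α → ℕ) : Prop :=
  (∀ u, f u ≤ 2) ∧
    ∀ u, f u = 0 → 2 ≤ ∑ w ∈ Finset.univ.filter (fun w => G.Adj u w), f w

/-- The Italian domination number γ_I(G). -/
noncomputable def italianNumber {α : Type*} [Fintype α] (G : SimpleGraph α) : ℕ :=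
  sInf {n | ∃ f : α → ℕ, IsIDF G f ∧ ∑ u, f u = n}

/-- A γ_I(G)-function: an IDF on G of minimum weight. -/
noncomputable def IsMinIDF {α : Type*} [Fintype α] (G : SimpleGraph α) (f : α → ℕ) : Prop :=
  IsIDF G f ∧ ∑ u, f u = italianNumber G

/-- D is a dominating set of G. -/
def IsDomSet {α : Type*} (G : SimpleGraph α) (D : Set α) : Prop :=
  ∀ u ∉ D, ∃ w ∈ D, G.Adj u w

/-- The domination number γ(G). -/
noncomputable def dominationNumber {α : Type*} [Fintype α] (G : SimpleGraph α) : ℕ :=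
  sInf {n | ∃ D : Finset α, IsDomSet G ↑D ∧ D.card = n}

/-- The degree of a vertex. -/
noncomputable def deg {α : Type*} [Fintype α] (G : SimpleGraph α) (u : α) : ℕ :=
  (Finset.univ.filter (fun w => G.Adj u w)).card

/-- The rooted product G∘_v H: one copy of H for each vertex of G, the root v of the
x-th copy being identified with the vertex x of G. The pair (x, y) is the vertex y of
the x-th copy of H; in particular (x, v) is the vertex x of G. -/
def rootedProd {α β : Type*} (G : SimpleGraph α) (H : SimpleGraph β) (v : β) :
    SimpleGraph (α × β) where
  Adj p q := (p.1 = q.1 ∧ H.Adj p.2 q.2) ∨ (p.2 = v ∧ q.2 = v ∧ G.Adj p.1 q.1)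
  symm := by
    constructor
    rintro ⟨x, y⟩ ⟨x', y'⟩ (⟨h1, h2⟩ | ⟨h1, h2, h3⟩)
    · exact Or.inl ⟨h1.symm, h2.symm⟩
    · exact Or.inr ⟨h2, h1, h3.symm⟩
  loopless := by
    constructor
    rintro ⟨x, y⟩ (⟨_, h⟩ | ⟨_, _, h⟩)
    · exact H.loopless.irrefl _ h
    · exact G.loopless.irrefl _ h

/-- The weight ω(f_x) of the restriction of f to the copy H_x. -/
def copyWeight {α β : Type*} [Fintype β] (f : α × β → ℕ) (x : α) : ℕ :=
  ∑ y, f (x, y)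

/-- The graph H − {v} obtained from H by deleting the vertex v. -/
def deleteVertex {β : Type*} (H : SimpleGraph β) (v : β) : SimpleGraph {w : β // w ≠ v} :=
  SimpleGraph.induce {w : β | w ≠ v} H

lemma IsIDF.italianNumber_le {α : Type*} [Fintype α] {G : SimpleGraph α} {f : α → ℕ}
    (hf : IsIDF G f) : italianNumber G ≤ ∑ u, f u :=
  Nat.sInf_le ⟨f, hf, rfl⟩

lemma isIDF_const_one {α : Type*} [Fintype α] (G : SimpleGraph α) : IsIDF G fun _ => 1 :=
  ⟨fun _ => by norm_num, fun _ h => absurd h one_ne_zero⟩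

lemma exists_isMinIDF {α : Type*} [Fintype α] (G : SimpleGraph α) : ∃ f, IsMinIDF G f :=
  Nat.sInf_mem (s := {n | ∃ f : α → ℕ, IsIDF G f ∧ ∑ u, f u = n})
    ⟨_, _, isIDF_const_one G, rfl⟩

lemma IsDomSet.dominationNumber_le {α : Type*} [Fintype α] {G : SimpleGraph α}
    {D : Finset α} (hD : IsDomSet G D) : dominationNumber G ≤ D.card :=
  Nat.sInf_le ⟨D, hD, rfl⟩

lemma exists_isDomSet_card_eq_dominationNumber {α : Type*} [Fintype α]
    (G : SimpleGraph α) : ∃ D : Finset α, IsDomSet G D ∧ D.card = dominationNumber G :=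
  Nat.sInf_mem (s := {n | ∃ D : Finset α, IsDomSet G ↑D ∧ D.card = n})
    ⟨_, univ, fun u hu => absurd (mem_coe.2 (mem_univ u)) hu, rfl⟩

lemma sum_eq_sum_copyWeight {α β : Type*} [Fintype α] [Fintype β] (f : α × β → ℕ) :
    ∑ p, f p = ∑ x, copyWeight f x :=
  Fintype.sum_prod_type f

lemma Fin.two_eq_or_eq_add_one : ∀ v y : Fin 2, y = v ∨ y = v + 1 := by decide

lemma Fin.sum_univ_two_eq_add (v : Fin 2) (g : Fin 2 → ℕ) : ∑ y, g y = g v + g (v + 1) := by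
  fin_cases v <;> simp [Fin.sum_univ_two, add_comm]

lemma sum_ite_mem_two_one {α : Type*} [Fintype α] (D : Finset α) :
    ∑ x, (if x ∈ D then 2 else 1) = Fintype.card α + D.card :=
  calc ∑ x, (if x ∈ D then 2 else 1) = ∑ x, (1 + if x ∈ D then 1 else 0) :=
        sum_congr rfl fun x _ => by split_ifs <;> rfl
    _ = Fintype.card α + D.card := by simp [sum_add_distrib]

section RootedProductK2

variable {α : Type*} (G : SimpleGraph α) (v : Fin 2)

lemma rootedProd_top_fin_two_adj {p q : α × Fin 2} :
    (rootedProd G ⊤ v).Adj p q ↔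
      (p.1 = q.1 ∧ p.2 ≠ q.2) ∨ (p.2 = v ∧ q.2 = v ∧ G.Adj p.1 q.1) :=
  Iff.rfl

lemma copyWeight_fin_two (f : α × Fin 2 → ℕ) (x : α) :
    copyWeight f x = f (x, v) + f (x, v + 1) :=
  Fin.sum_univ_two_eq_add v _

noncomputable def idfOfDomSet (D : Finset α) (p : α × Fin 2) : ℕ :=
  if p.1 ∈ D then (if p.2 = v then 2 else 0) else (if p.2 = v then 0 else 1)

lemma copyWeight_idfOfDomSet (D : Finset α) (x : α) :
    copyWeight (idfOfDomSet v D) x = if x ∈ D then 2 else 1 := by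
  rw [copyWeight_fin_two v]
  split_ifs with h <;> simp [idfOfDomSet, h]

variable [Fintype α]

lemma filter_adj_pendant (x : α) :
    univ.filter (fun w => (rootedProd G ⊤ v).Adj (x, v + 1) w) = {(x, v)} := by
  ext ⟨y, b⟩
  simp only [mem_filter, mem_univ, true_and, mem_singleton, Prod.mk.injEq,
    rootedProd_top_fin_two_adj]
  rcases Fin.two_eq_or_eq_add_one v b with rfl | rfl <;> simp [eq_comm]

lemma filter_adj_root (x : α) :
    univ.filter (fun w => (rootedProd G ⊤ v).Adj (x, v) w) =
      insert (x, v + 1) ((univ.filter (G.Adj x)).map (.sectL α v)) := by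
  ext ⟨y, b⟩
  simp only [mem_filter, mem_univ, true_and, mem_insert, mem_map, Prod.mk.injEq,
    rootedProd_top_fin_two_adj, Function.Embedding.sectL_apply]
  rcases Fin.two_eq_or_eq_add_one v b with rfl | rfl <;> simp [eq_comm]

lemma sum_filter_adj_root (f : α × Fin 2 → ℕ) (x : α) :
    ∑ w ∈ univ.filter (fun w => (rootedProd G ⊤ v).Adj (x, v) w), f w
      = f (x, v + 1) + ∑ y ∈ univ.filter (G.Adj x), f (y, v) := by
  rw [filter_adj_root, sum_insert, sum_map]
  · rfl
  · simp

lemma sum_idfOfDomSet (D : Finset α) :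
    ∑ p, idfOfDomSet v D p = Fintype.card α + D.card := by
  simp only [sum_eq_sum_copyWeight, copyWeight_idfOfDomSet, sum_ite_mem_two_one]

variable {G v}

lemma IsDomSet.isIDF_idfOfDomSet {D : Finset α} (hD : IsDomSet G D) :
    IsIDF (rootedProd G ⊤ v) (idfOfDomSet v D) := by
  refine ⟨fun p => by unfold idfOfDomSet; split_ifs <;> norm_num, ?_⟩
  rintro ⟨x, b⟩ h0
  rcases Fin.two_eq_or_eq_add_one v b with rfl | rfl
  · have hx : x ∉ D := fun hx => by simp [idfOfDomSet, hx] at h0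
    obtain ⟨y, hyD, hxy⟩ := hD x (mem_coe.not.2 hx)
    rw [sum_filter_adj_root]
    calc 2 = idfOfDomSet b D (y, b) := by simp [idfOfDomSet, mem_coe.1 hyD]
      _ ≤ ∑ y ∈ univ.filter (G.Adj x), idfOfDomSet b D (y, b) :=
        single_le_sum (f := fun y => idfOfDomSet b D (y, b)) (fun _ _ => Nat.zero_le _)
          (mem_filter.2 ⟨mem_univ _, hxy⟩)
      _ ≤ _ := le_add_self
  · have hx : x ∈ D := by
      by_contra hx
      simp [idfOfDomSet, hx] at h0
    simp [filter_adj_pendant, idfOfDomSet, hx]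

variable {f : α × Fin 2 → ℕ}

lemma IsIDF.two_le_root_of_pendant_eq_zero (hf : IsIDF (rootedProd G ⊤ v) f) {x : α}
    (h : f (x, v + 1) = 0) : 2 ≤ f (x, v) := by
  simpa [filter_adj_pendant] using hf.2 _ h

lemma IsIDF.two_le_copyWeight_of_root_pos (hf : IsIDF (rootedProd G ⊤ v) f) {x : α}
    (h : 0 < f (x, v)) : 2 ≤ copyWeight f x := by
  rw [copyWeight_fin_two v]
  rcases Nat.eq_zero_or_pos (f (x, v + 1)) with h0 | h0
  · have := hf.two_le_root_of_pendant_eq_zero h0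
    omega
  · omega

lemma IsIDF.one_le_copyWeight (hf : IsIDF (rootedProd G ⊤ v) f) (x : α) :
    1 ≤ copyWeight f x := by
  rw [copyWeight_fin_two v]
  rcases Nat.eq_zero_or_pos (f (x, v + 1)) with h0 | h0
  · have := hf.two_le_root_of_pendant_eq_zero h0
    omega
  · omega

lemma IsIDF.isDomSet_filter_two_le_copyWeight (hf : IsIDF (rootedProd G ⊤ v) f) :
    IsDomSet G ↑(univ.filter fun x => 2 ≤ copyWeight f x) := by
  intro x hx
  replace hx : copyWeight f x < 2 := by simpa using hx
  have hroot : f (x, v) = 0 := by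
    by_contra h
    exact (hf.two_le_copyWeight_of_root_pos (Nat.pos_of_ne_zero h)).not_gt hx
  have hpendant : f (x, v + 1) ≤ 1 := by
    rw [copyWeight_fin_two v] at hx
    omega
  have hsum := hf.2 (x, v) hroot
  rw [sum_filter_adj_root] at hsum
  obtain ⟨y, hxy, hy⟩ := exists_ne_zero_of_sum_ne_zero (s := univ.filter (G.Adj x))
    (f := fun y => f (y, v)) (by omega)
  refine ⟨y, ?_, by simpa using hxy⟩
  simpa using hf.two_le_copyWeight_of_root_pos (Nat.pos_of_ne_zero hy)

lemma IsIDF.card_add_dominationNumber_le (hf : IsIDF (rootedProd G ⊤ v) f) :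
    Fintype.card α + dominationNumber G ≤ ∑ p, f p := by
  set D := univ.filter fun x => 2 ≤ copyWeight f x
  calc Fintype.card α + dominationNumber G ≤ Fintype.card α + D.card := by
        gcongr
        exact hf.isDomSet_filter_two_le_copyWeight.dominationNumber_le
    _ = ∑ x, if x ∈ D then 2 else 1 := (sum_ite_mem_two_one D).symm
    _ ≤ ∑ x, copyWeight f x := sum_le_sum fun x _ => by
        split_ifs with h
        · simpa [D] using h
        · exact hf.one_le_copyWeight x
    _ = ∑ p, f p := (sum_eq_sum_copyWeight f).symm

end RootedProductK2

theorem stmt7_general {α : Type*} [Fintype α] (G : SimpleGraph α) (v : Fin 2) :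
    italianNumber (rootedProd G (⊤ : SimpleGraph (Fin 2)) v) =
      Fintype.card α + dominationNumber G := by
  obtain ⟨D, hD, hcard⟩ := exists_isDomSet_card_eq_dominationNumber G
  obtain ⟨f, hf, hweight⟩ := exists_isMinIDF (rootedProd G ⊤ v)
  refine le_antisymm ?_ (hweight ▸ hf.card_add_dominationNumber_le)
  calc italianNumber (rootedProd G ⊤ v) ≤ ∑ p, idfOfDomSet v D p :=
        hD.isIDF_idfOfDomSet.italianNumber_le
    _ = Fintype.card α + dominationNumber G := by rw [sum_idfOfDomSet, hcard]

/-- Corollary: for any graph G and any vertex v of K_2,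
γ_I(G∘_v K_2) = n(G) + γ(G). -/
theorem stmt7 {α : Type*} [Fintype α] [Nonempty α] (G : SimpleGraph α) (v : Fin 2) :
    italianNumber (rootedProd G (⊤ : SimpleGraph (Fin 2)) v) =
      Fintype.card α + dominationNumber G :=
  stmt7_general G v
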